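/- Let (X, γ) be a generalized Minkowski space such that γ is not a norm, i.e., there exists x ∈ X with γ(−x) ≠ γ(x). Then there exists x₀ ∈ X \ {0} such that ft({x₀, 0}) = {0}, i.e., 0 is the unique minimizer of x ↦ γ(x₀ − x) + γ(0 − x). -/

import Mathlib

/-- A gauge on a real vector space: nonnegative, definite at `0`, positively homogeneous,
and subadditive. -/
def IsGauge {X : Type*} [AddCommGroup X] [Module ℝ X] (γ : X → ℝ) : Prop :=
  (∀ x, 0 ≤ γ x) ∧ (∀ x : X, γ x = 0 → x = 0) ∧
    (∀ (l : ℝ) (x : X), 0 ≤ l → γ (l • x) = l * γ x) ∧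
    ∀ x y, γ (x + y) ≤ γ x + γ y

/-!
Choose `x₀ ≠ 0` maximising the asymmetry ratio `γ(-v) / γ(v)`, which exists by compactness of
the unit sphere and homogeneity, and is `> 1` since `γ` is not symmetric. Writing `A = γ x₀`,
`B = γ(-x₀)`, for any `z` we get `B ≤ γ(z - x₀) + γ(-z)` and, by maximality,
`γ(z - x₀) ≤ (B / A) γ(x₀ - z)`. If `z` also does at least as well as `0`,
i.e. `γ(x₀ - z) + γ(-z) ≤ A`, these combine to `(B - A) A ≤ (B - A) γ(x₀ - z)`, forcing
`γ(x₀ - z) = A` and `γ(-z) = 0`, so `z = 0`.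
-/

namespace IsGauge

variable {X : Type*}

section Module

variable [AddCommGroup X] [Module ℝ X] {γ : X → ℝ}

lemma map_zero (hγ : IsGauge γ) : γ 0 = 0 := by
  simpa using hγ.2.2.1 0 0 le_rfl

lemma pos_of_ne_zero (hγ : IsGauge γ) {x : X} (hx : x ≠ 0) : 0 < γ x :=
  (hγ.1 x).lt_of_ne fun h => hx (hγ.2.1 x h.symm)

lemma convexOn (hγ : IsGauge γ) : ConvexOn ℝ Set.univ γ := by
  refine ⟨convex_univ, fun x _ y _ a b ha hb _ => ?_⟩
  calc γ (a • x + b • y) ≤ γ (a • x) + γ (b • y) := hγ.2.2.2 _ _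
    _ = a • γ x + b • γ y := by rw [hγ.2.2.1 a x ha, hγ.2.2.1 b y hb, smul_eq_mul, smul_eq_mul]

lemma neg_mul_le_mul_smul (hγ : IsGauge γ) {a b : ℝ} {u : X} (h : γ (-u) * a ≤ b * γ u)
    {c : ℝ} (hc : 0 ≤ c) : γ (-(c • u)) * a ≤ b * γ (c • u) := by
  rw [← smul_neg, hγ.2.2.1 c _ hc, hγ.2.2.1 c u hc, mul_assoc, mul_left_comm b]
  exact mul_le_mul_of_nonneg_left h hc

lemma lt_neg_of_forall_neg_mul_le (hγ : IsGauge γ) {x₀ w : X} (hx₀ : x₀ ≠ 0)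
    (hmax : ∀ v, γ (-v) * γ x₀ ≤ γ (-x₀) * γ v) (hw : γ w < γ (-w)) : γ x₀ < γ (-x₀) := by
  have hw0 : w ≠ 0 := by rintro rfl; simp at hw
  have := hmax w
  nlinarith [hγ.pos_of_ne_zero hx₀, hγ.pos_of_ne_zero hw0]

lemma eq_zero_of_add_le (hγ : IsGauge γ) {x₀ z : X}
    (hmax : ∀ v, γ (-v) * γ x₀ ≤ γ (-x₀) * γ v) (hlt : γ x₀ < γ (-x₀))
    (hz : γ (x₀ - z) + γ (-z) ≤ γ x₀) : z = 0 := by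
  have htri : γ (-x₀) ≤ γ (z - x₀) + γ (-z) := by
    simpa [sub_add_eq_add_sub, add_neg_cancel_comm] using hγ.2.2.2 (z - x₀) (-z)
  have hratio : γ (z - x₀) * γ x₀ ≤ γ (-x₀) * γ (x₀ - z) := by
    simpa using hmax (x₀ - z)
  have hp : γ x₀ ≤ γ (x₀ - z) := by
    nlinarith [hγ.1 (z - x₀), hγ.1 (-z), hγ.1 x₀]
  simpa using hγ.2.1 (-z) (le_antisymm (by linarith) (hγ.1 _))

lemma fermatTorricelli_pair_eq_singleton_zero (hγ : IsGauge γ) {x₀ : X}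
    (hmax : ∀ v, γ (-v) * γ x₀ ≤ γ (-x₀) * γ v) (hlt : γ x₀ < γ (-x₀)) :
    {x : X | ∀ y : X, γ (x₀ - x) + γ (0 - x) ≤ γ (x₀ - y) + γ (0 - y)} = {0} := by
  refine Set.eq_singleton_iff_unique_mem.2 ⟨fun y => ?_, fun z hz => ?_⟩
  · by_contra! h
    have hy : y = 0 := hγ.eq_zero_of_add_le hmax hlt (by simpa [hγ.map_zero] using h.le)
    simp [hy] at h
  · exact hγ.eq_zero_of_add_le hmax hlt (by simpa [hγ.map_zero] using hz 0)

end Module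

section Normed

variable [NormedAddCommGroup X] [NormedSpace ℝ X] [FiniteDimensional ℝ X] {γ : X → ℝ}

lemma continuous (hγ : IsGauge γ) : Continuous γ :=
  continuousOn_univ.1 (hγ.convexOn.continuousOn isOpen_univ)

lemma exists_forall_neg_mul_le [Nontrivial X] (hγ : IsGauge γ) :
    ∃ x₀ : X, x₀ ≠ 0 ∧ ∀ v, γ (-v) * γ x₀ ≤ γ (-x₀) * γ v := by
  have hsphere : ∀ u ∈ Metric.sphere (0 : X) 1, u ≠ 0 := by
    rintro u hu rfl
    simp at hu
  obtain ⟨x₀, hx₀, hmax⟩ := (isCompact_sphere (0 : X) 1).exists_isMaxOn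
    (NormedSpace.sphere_nonempty.2 zero_le_one)
    ((hγ.continuous.comp continuous_neg).continuousOn.div hγ.continuous.continuousOn
      fun u hu => (hγ.pos_of_ne_zero (hsphere u hu)).ne')
  refine ⟨x₀, hsphere x₀ hx₀, fun v => ?_⟩
  rcases eq_or_ne v 0 with rfl | hv
  · simp [hγ.map_zero]
  have hu : ‖v‖⁻¹ • v ∈ Metric.sphere (0 : X) 1 := by
    simpa using norm_smul_inv_norm (𝕜 := ℝ) hv
  have hcross : γ (-(‖v‖⁻¹ • v)) * γ x₀ ≤ γ (-x₀) * γ (‖v‖⁻¹ • v) :=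
    (div_le_div_iff₀ (hγ.pos_of_ne_zero (hsphere _ hu))
      (hγ.pos_of_ne_zero (hsphere x₀ hx₀))).1 (hmax hu)
  simpa [smul_smul, mul_inv_cancel₀ (norm_ne_zero_iff.2 hv)] using
    hγ.neg_mul_le_mul_smul hcross (norm_nonneg v)

end Normed

end IsGauge

/-- If the gauge `γ` is not a norm, then there is `x₀ ≠ 0` such that `0` is the unique
minimizer of `x ↦ γ(x₀ - x) + γ(0 - x)`, i.e. `ft({x₀, 0}) = {0}`. -/
theorem exists_fermatTorricelli_singleton_zero_of_not_norm
    {X : Type*} [NormedAddCommGroup X] [NormedSpace ℝ X] [FiniteDimensional ℝ X]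
    (γ : X → ℝ) (hγ : IsGauge γ) (hns : ∃ x : X, γ (-x) ≠ γ x) :
    ∃ x₀ : X, x₀ ≠ 0 ∧
      {x : X | ∀ y : X, γ (x₀ - x) + γ (0 - x) ≤ γ (x₀ - y) + γ (0 - y)} = {0} := by
  obtain ⟨w, hw⟩ : ∃ w : X, γ w < γ (-w) := by
    obtain ⟨x, hx⟩ := hns
    rcases hx.lt_or_gt with h | h
    · exact ⟨-x, by simpa using h⟩
    · exact ⟨x, h⟩
  have : Nontrivial X := ⟨⟨w, 0, by rintro rfl; simp at hw⟩⟩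
  obtain ⟨x₀, hx₀, hmax⟩ := hγ.exists_forall_neg_mul_le
  exact ⟨x₀, hx₀, hγ.fermatTorricelli_pair_eq_singleton_zero hmax
    (hγ.lt_neg_of_forall_neg_mul_le hx₀ hmax hw)⟩
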